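/- If Λ ⊆ [N]² is corner-free, then the set V_s = {(x,y,z) ∈ [N]³ : (x,y) ∈ Λ, x + y + z = s} is three point free for every integer s. -/
import Mathlib

/-- A set `Λ ⊆ ℤ²` is corner-free. -/
def CornerFree (Λ : Finset (ℤ × ℤ)) : Prop :=
  ∀ x y x' y', (x, y) ∈ Λ → (x', y) ∈ Λ → (x, y') ∈ Λ → x - y = x' - y' → x = x' ∧ y = y'

/-- A set `V ⊆ ℤ³` is three point free. -/
def ThreePointFree (V : Set (ℤ × ℤ × ℤ)) : Prop :=
  ∀ x y z x' y' z', (x, y, z') ∈ V → (x, y', z) ∈ V → (x', y, z) ∈ V →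
    x = x' ∧ y = y' ∧ z = z'

theorem slice_three_point_free (N : ℕ) (Λ : Finset (ℤ × ℤ))
    (hsub : ∀ p ∈ Λ, p.1 ∈ Finset.Icc (1 : ℤ) N ∧ p.2 ∈ Finset.Icc (1 : ℤ) N)
    (hfree : CornerFree Λ) (s : ℤ) :
    ThreePointFree
      {p : ℤ × ℤ × ℤ | (p.1, p.2.1) ∈ Λ ∧
        p.1 ∈ Finset.Icc (1 : ℤ) N ∧ p.2.1 ∈ Finset.Icc (1 : ℤ) N ∧
        p.2.2 ∈ Finset.Icc (1 : ℤ) N ∧ p.1 + p.2.1 + p.2.2 = s} := by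
  intro x y z x' y' z' h1 h2 h3
  simp only [Set.mem_setOf_eq] at h1 h2 h3
  obtain ⟨m1, -, -, -, s1⟩ := h1
  obtain ⟨m2, -, -, -, s2⟩ := h2
  obtain ⟨m3, -, -, -, s3⟩ := h3
  have hxy : x = x' ∧ y = y' := hfree x y x' y' m1 m3 m2 (by omega)
  exact ⟨hxy.1, hxy.2, by omega⟩
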